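/- arXiv:2304.12770 — 2 statements merged into one kernel-verified Lean document; each statement's English description precedes it below -/
import Mathlib

section
/- In the exponential family setting with l = t, if f_θ = ∇F for an L-strongly convex smooth F : ℝ^l → ℝ^l, then for every data point x, F(p(z) ‖ p_θ(z|x)) ≥ L² ∫ ‖T(x) − ∇A(f_θ(z))‖² p(z) dz, where F(·‖·) is the relative Fisher information divergence. -/
open MeasureTheory Real InnerProductSpace


variable {E : Type*} [NormedAddCommGroup E] [InnerProductSpace ℝ E] [CompleteSpace E]




lemma grad_mono {G : E → ℝ} {g : E → E} (hG : ConvexOn ℝ Set.univ G)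
    (hg : ∀ x, HasGradientAt G (g x) x) (x y : E) :
    (inner ℝ (g x) (y - x) : ℝ) ≤ inner ℝ (g y) (y - x) := by
  set v := y - x with hv
  have hline : ∀ t : ℝ, HasDerivAt (fun t : ℝ => x + t • v) v t := fun t => by
    simpa using ((hasDerivAt_id t).smul_const v).const_add x
  have hφ : ∀ t : ℝ, HasDerivAt (fun t : ℝ => G (x + t • v)) (inner ℝ (g (x + t • v)) v : ℝ) t := by
    intro t
    have h := ((hg (x + t • v)).hasFDerivAt.comp_hasDerivAt t (hline t))
    simp [InnerProductSpace.toDual_apply_apply] at h; exact h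
  have hconv : ConvexOn ℝ Set.univ (fun t : ℝ => G (x + t • v)) := by
    have := hG.comp_affineMap (AffineMap.lineMap x y)
    have he : (fun t : ℝ => G (x + t • v)) = G ∘ (AffineMap.lineMap x y) := by
      funext t; simp [AffineMap.lineMap_apply, hv]; rw [add_comm]
    rw [he]
    simpa using this
  have h0 := hconv.le_slope_of_hasDerivAt (Set.mem_univ (0:ℝ)) (Set.mem_univ (1:ℝ)) one_pos (hφ 0)
  have h1 := hconv.slope_le_of_hasDerivAt (Set.mem_univ (0:ℝ)) (Set.mem_univ (1:ℝ)) one_pos (hφ 1)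
  have := h0.trans h1
  simpa [hv] using this



lemma gradNormSq (L : ℝ) (z : E) : HasGradientAt (fun z : E => L / 2 * ‖z‖ ^ 2) (L • z) z := by
  have h1 : HasFDerivAt (fun z : E => (inner ℝ z z : ℝ))
      ((fderivInnerCLM ℝ (z, z)).comp ((ContinuousLinearMap.id ℝ E).prod (ContinuousLinearMap.id ℝ E))) z :=
    (hasFDerivAt_id z).inner ℝ (hasFDerivAt_id z)
  have h2 : HasFDerivAt (fun z : E => L / 2 * ‖z‖ ^ 2)
      ((L / 2) • ((fderivInnerCLM ℝ (z, z)).comp ((ContinuousLinearMap.id ℝ E).prod (ContinuousLinearMap.id ℝ E)))) z := by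
    have he : (fun z : E => L / 2 * ‖z‖ ^ 2) = fun z : E => L / 2 * (inner ℝ z z : ℝ) := by
      funext w; rw [real_inner_self_eq_norm_sq]
    rw [he]
    exact h1.const_mul (L / 2)
  have key : (toDual ℝ E) (L • z) = (L / 2) • ((fderivInnerCLM ℝ (z, z)).comp ((ContinuousLinearMap.id ℝ E).prod (ContinuousLinearMap.id ℝ E))) := by
    apply ContinuousLinearMap.ext
    intro v
    simp [InnerProductSpace.toDual_apply_apply, fderivInnerCLM_apply, real_inner_comm z v,
    real_inner_smul_left]
    ring
  rw [HasGradientAt, HasGradientAtFilter, key]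
  exact h2

lemma strong_mono {L : ℝ} {F : E → ℝ} {f : E → E}
    (hFconv : ConvexOn ℝ Set.univ (fun z => F z - L / 2 * ‖z‖ ^ 2))
    (hf : ∀ z, HasGradientAt F (f z) z) (x y : E) :
    L * ‖y - x‖ ^ 2 ≤ inner ℝ (f y - f x) (y - x) := by
  have hg : ∀ z, HasGradientAt (fun z => F z - L / 2 * ‖z‖ ^ 2) (f z - L • z) z := by
    intro z
    rw [hasGradientAt_iff_hasFDerivAt, map_sub]
    exact (hf z).hasFDerivAt.sub (gradNormSq L z).hasFDerivAt
  have h := grad_mono hFconv hg x y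
  have hx : (inner ℝ (f x - L • x) (y - x) : ℝ) = inner ℝ (f x) (y - x) - L * inner ℝ x (y - x) := by
    rw [inner_sub_left, real_inner_smul_left]
  have hy : (inner ℝ (f y - L • y) (y - x) : ℝ) = inner ℝ (f y) (y - x) - L * inner ℝ y (y - x) := by
    rw [inner_sub_left, real_inner_smul_left]
  have hsub : (inner ℝ (f y - f x) (y - x) : ℝ) = inner ℝ (f y) (y - x) - inner ℝ (f x) (y - x) := by
    rw [inner_sub_left]
  have hnorm : (inner ℝ y (y - x) : ℝ) - inner ℝ x (y - x) = ‖y - x‖ ^ 2 := by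
    rw [← inner_sub_left, real_inner_self_eq_norm_sq]
  have h5 : L * ((inner ℝ y (y - x) : ℝ) - inner ℝ x (y - x)) = L * ‖y - x‖ ^ 2 := by rw [hnorm]
  linarith [h, hx, hy, hsub, h5, mul_sub L (inner ℝ y (y - x) : ℝ) (inner ℝ x (y - x) : ℝ) ▸ h5]

lemma hess_inner {L : ℝ} {F : E → ℝ} {f : E → E}
    (hFconv : ConvexOn ℝ Set.univ (fun z => F z - L / 2 * ‖z‖ ^ 2))
    (hf : ∀ z, HasGradientAt F (f z) z) (z v : E) (hfd : DifferentiableAt ℝ f z) :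
    L * ‖v‖ ^ 2 ≤ inner ℝ (fderiv ℝ f z v) v := by
  set B := fderiv ℝ f z with hB
  have hline : HasDerivAt (fun t : ℝ => z + t • v) v 0 := by
    simpa using ((hasDerivAt_id (0:ℝ)).smul_const v).const_add z
  have hfd' : HasFDerivAt f B (z + (0:ℝ) • v) := by simpa using hfd.hasFDerivAt
  have hg : HasDerivAt (fun t : ℝ => f (z + t • v)) (B v) 0 :=
    hfd'.comp_hasDerivAt 0 hline
  have htend : Filter.Tendsto (slope (fun t : ℝ => f (z + t • v)) 0) (nhdsWithin 0 (Set.Ioi 0)) (nhds (B v)) :=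
    (hasDerivAt_iff_tendsto_slope.mp hg).mono_left
      (nhdsWithin_mono _ (fun t ht => ne_of_gt ht))
  have htend2 : Filter.Tendsto (fun t : ℝ => (inner ℝ (slope (fun t : ℝ => f (z + t • v)) 0 t) v : ℝ))
      (nhdsWithin 0 (Set.Ioi 0)) (nhds (inner ℝ (B v) v : ℝ)) :=
    htend.inner tendsto_const_nhds
  refine ge_of_tendsto htend2 ?_
  filter_upwards [self_mem_nhdsWithin] with t ht
  have ht0 : (0:ℝ) < t := ht
  have hsm := strong_mono hFconv hf z (z + t • v)
  have hyx : z + t • v - z = t • v := by abel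
  rw [hyx] at hsm
  have h1 : (inner ℝ (f (z + t • v) - f z) (t • v) : ℝ) = t * inner ℝ (f (z + t • v) - f z) v :=
    real_inner_smul_right _ _ _
  have h2 : ‖t • v‖ ^ 2 = t ^ 2 * ‖v‖ ^ 2 := by
    rw [norm_smul]; simp [abs_of_pos ht0]; ring
  have hs : slope (fun t : ℝ => f (z + t • v)) 0 t = t⁻¹ • (f (z + t • v) - f z) := by
    rw [slope_def_module]; simp
  have h3 : L * (t ^ 2 * ‖v‖ ^ 2) ≤ t * inner ℝ (f (z + t • v) - f z) v := by
    rw [← h2, ← h1]; exact hsm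
  rw [hs, real_inner_smul_left, le_inv_mul_iff₀ ht0]
  nlinarith [h3]

lemma hess_norm {L : ℝ} {F : E → ℝ} {f : E → E} (hL : 0 ≤ L)
    (hFconv : ConvexOn ℝ Set.univ (fun z => F z - L / 2 * ‖z‖ ^ 2))
    (hf : ∀ z, HasGradientAt F (f z) z) (z v : E) (hfd : DifferentiableAt ℝ f z) :
    L * ‖v‖ ≤ ‖fderiv ℝ f z v‖ := by
  rcases eq_or_ne v 0 with rfl | hv
  · simp
  · have h1 := hess_inner hFconv hf z v hfd
    have h2 : (inner ℝ (fderiv ℝ f z v) v : ℝ) ≤ ‖fderiv ℝ f z v‖ * ‖v‖ := real_inner_le_norm _ _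
    have hv0 : 0 < ‖v‖ := norm_pos_iff.mpr hv
    nlinarith [h1, h2, hv0]

lemma contDiff_of_grad {F : E → ℝ} {f : E → E} (hFs : ContDiff ℝ (⊤ : ℕ∞) F)
    (hf : ∀ z, HasGradientAt F (f z) z) : ContDiff ℝ (⊤ : ℕ∞) f := by
  have hfe : f = fun y => (InnerProductSpace.toDual ℝ E).symm (fderiv ℝ F y) := by
    funext y
    rw [(hf y).hasFDerivAt.fderiv]
    simp
  rw [hfe]
  exact (InnerProductSpace.toDual ℝ E).symm.contDiff.comp (hFs.fderiv_right (by simp))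

lemma hess_symm {F : E → ℝ} {f : E → E} (hf : ∀ z, HasGradientAt F (f z) z)
    (z : E) (hfd : DifferentiableAt ℝ f z) (v w : E) :
    (inner ℝ (fderiv ℝ f z v) w : ℝ) = inner ℝ (fderiv ℝ f z w) v := by
  set D := (InnerProductSpace.toDual ℝ E).toContinuousLinearEquiv.toContinuousLinearMap with hD
  have hD' : ∀ y : E, D y = InnerProductSpace.toDual ℝ E y := fun y => rfl
  have hsnd : HasFDerivAt (fun y => InnerProductSpace.toDual ℝ E (f y))
      (D.comp (fderiv ℝ f z)) z := D.hasFDerivAt.comp z hfd.hasFDerivAt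
  have hsym := second_derivative_symmetric (f := F)
    (f' := fun y => InnerProductSpace.toDual ℝ E (f y))
    (fun y => (hf y).hasFDerivAt) hsnd v w
  simpa [hD', InnerProductSpace.toDual_apply_apply] using hsym


set_option maxHeartbeats 1000000 in
/-- Theorem 1: in the exponential-family setting with `l = t` and decoder
`f_θ = ∇F` for an `L`-strongly convex smooth `F`, for every data point `x`
(with sufficient statistic `c = T x`),
`F(p(z) ‖ p_θ(z|x)) ≥ L² ∫ ‖T(x) - ∇A(f_θ(z))‖² p(z) dz`. -/
theorem fisher_lower_bound_posterior {l : ℕ} {L : ℝ} (hL : 0 < L)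
    (p : EuclideanSpace ℝ (Fin l) → ℝ)
    (F : EuclideanSpace ℝ (Fin l) → ℝ)
    (f : EuclideanSpace ℝ (Fin l) → EuclideanSpace ℝ (Fin l))
    (A : EuclideanSpace ℝ (Fin l) → ℝ)
    (gA : EuclideanSpace ℝ (Fin l) → EuclideanSpace ℝ (Fin l))
    (c : EuclideanSpace ℝ (Fin l)) (h₀ Z : ℝ)
    (hp : ∀ z, 0 < p z) (hps : ContDiff ℝ (⊤ : ℕ∞) p)
    (hpint : ∫ z, p z = 1)
    (hFs : ContDiff ℝ (⊤ : ℕ∞) F)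
    (hFconv : ConvexOn ℝ Set.univ (fun z => F z - L / 2 * ‖z‖ ^ 2))
    (hf : ∀ z, HasGradientAt F (f z) z)
    (hAs : ContDiff ℝ (⊤ : ℕ∞) A)
    (hgA : ∀ ξ, HasGradientAt A (gA ξ) ξ)
    (hh : 0 < h₀)
    (like : EuclideanSpace ℝ (Fin l) → ℝ)
    (hlike : like = fun z => h₀ * Real.exp (inner ℝ (f z) c - A (f z)))
    (hZ : Z = ∫ z, p z * like z) (hZpos : 0 < Z)
    (post : EuclideanSpace ℝ (Fin l) → ℝ)
    (hpost : post = fun z => p z * like z / Z)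
    (hint1 : Integrable (fun z =>
      ‖gradient (fun w => Real.log (p w)) z - gradient (fun w => Real.log (post w)) z‖ ^ 2 * p z))
    (hint2 : Integrable (fun z => ‖c - gA (f z)‖ ^ 2 * p z)) :
    L ^ 2 * ∫ z, ‖c - gA (f z)‖ ^ 2 * p z
      ≤ ∫ z, ‖gradient (fun w => Real.log (p w)) z
              - gradient (fun w => Real.log (post w)) z‖ ^ 2 * p z := by
  have hfc : ContDiff ℝ (⊤ : ℕ∞) f := contDiff_of_grad hFs hf
  have hfd : ∀ z : (EuclideanSpace ℝ (Fin l)), DifferentiableAt ℝ f z := fun z => (hfc.differentiable (by simp)) z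
  -- pointwise identity for the gradient difference
  have key : ∀ z : (EuclideanSpace ℝ (Fin l)), gradient (fun w => Real.log (p w)) z
      - gradient (fun w => Real.log (post w)) z = -(fderiv ℝ f z (c - gA (f z))) := by
    intro z
    set B := fderiv ℝ f z with hBdef
    set u : (EuclideanSpace ℝ (Fin l)) := c - gA (f z) with hu
    have hBz : HasFDerivAt f B z := (hfd z).hasFDerivAt
    -- differentiability of log p
    have dlogp : DifferentiableAt ℝ (fun w => Real.log (p w)) z :=
      ((hps.differentiable (by simp)) z).log (hp z).ne'
    have hlogp : HasGradientAt (fun w => Real.log (p w))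
        (gradient (fun w => Real.log (p w)) z) z := dlogp.hasGradientAt
    -- gradient of φ w = ⟪f w, c⟫ - A (f w)
    have h1 : HasFDerivAt (fun w : (EuclideanSpace ℝ (Fin l)) => (inner ℝ (f w) c : ℝ))
        ((innerSL ℝ c).comp B) z := by
      have he : (fun w : (EuclideanSpace ℝ (Fin l)) => (inner ℝ (f w) c : ℝ)) = fun w => (innerSL ℝ c) (f w) := by
        funext w; exact (real_inner_comm _ _).trans (innerSL_apply_apply ℝ c (f w)).symm
      rw [he]
      exact (innerSL ℝ c).hasFDerivAt.comp z hBz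
    have h2 : HasFDerivAt (fun w : (EuclideanSpace ℝ (Fin l)) => A (f w))
        ((InnerProductSpace.toDual ℝ (EuclideanSpace ℝ (Fin l)) (gA (f z))).comp B) z :=
      (hgA (f z)).hasFDerivAt.comp z hBz
    have hφ : HasGradientAt (fun w : (EuclideanSpace ℝ (Fin l)) => (inner ℝ (f w) c : ℝ) - A (f w)) (B u) z := by
      rw [hasGradientAt_iff_hasFDerivAt]
      have hCLM : InnerProductSpace.toDual ℝ (EuclideanSpace ℝ (Fin l)) (B u)
          = (innerSL ℝ c).comp B - (InnerProductSpace.toDual ℝ (EuclideanSpace ℝ (Fin l)) (gA (f z))).comp B := by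
        apply ContinuousLinearMap.ext
        intro v
        have hsymm := hess_symm hf z (hfd z) u v
        simp only [InnerProductSpace.toDual_apply_apply, ContinuousLinearMap.sub_apply,
          ContinuousLinearMap.comp_apply, innerSL_apply_apply]
        rw [hsymm, hu, inner_sub_right, real_inner_comm (B v) c, real_inner_comm (B v) (gA (f z))]
      rw [hCLM]
      exact h1.sub h2
    -- log post = log p + φ + const
    have hposteq : (fun w => Real.log (post w))
        = fun w => Real.log (p w) + ((inner ℝ (f w) c : ℝ) - A (f w))
            + (Real.log h₀ - Real.log Z) := by
      funext w
      simp only [hpost, hlike]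
      rw [Real.log_div (mul_pos (hp w) (by positivity)).ne' hZpos.ne', Real.log_mul (hp w).ne' (by positivity),
        Real.log_mul hh.ne' (Real.exp_pos _).ne', Real.log_exp]
      ring
    have hpostgrad : HasGradientAt (fun w => Real.log (post w))
        (gradient (fun w => Real.log (p w)) z + B u) z := by
      rw [hposteq, hasGradientAt_iff_hasFDerivAt, map_add]
      exact ((hlogp.hasFDerivAt.add hφ.hasFDerivAt)).add_const _
    rw [hpostgrad.gradient]
    abel
  -- pointwise norm bound, then integrate
  have hpt : ∀ z : (EuclideanSpace ℝ (Fin l)), L ^ 2 * (‖c - gA (f z)‖ ^ 2 * p z)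
      ≤ ‖gradient (fun w => Real.log (p w)) z
          - gradient (fun w => Real.log (post w)) z‖ ^ 2 * p z := by
    intro z
    have hn := hess_norm hL.le hFconv hf z (c - gA (f z)) (hfd z)
    have hnn : L * ‖c - gA (f z)‖ ≤ ‖gradient (fun w => Real.log (p w)) z
        - gradient (fun w => Real.log (post w)) z‖ := by
      rw [key z, norm_neg]; exact hn
    have hsq : (L * ‖c - gA (f z)‖) ^ 2 ≤ ‖gradient (fun w => Real.log (p w)) z
        - gradient (fun w => Real.log (post w)) z‖ ^ 2 := by
      apply pow_le_pow_left₀ (by positivity) hnn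
    calc L ^ 2 * (‖c - gA (f z)‖ ^ 2 * p z) = (L * ‖c - gA (f z)‖) ^ 2 * p z := by ring
      _ ≤ _ := mul_le_mul_of_nonneg_right hsq (hp z).le
  calc L ^ 2 * ∫ z, ‖c - gA (f z)‖ ^ 2 * p z
      = ∫ z, L ^ 2 * (‖c - gA (f z)‖ ^ 2 * p z) := (integral_const_mul _ _).symm
    _ ≤ _ := integral_mono (hint2.const_mul _) hint1 hpt
end

section
/- Combining Theorem 2 and the bias-variance decomposition: F̄_θ ≥ L²(Var[S_θ] + ‖E[S_{θ*}] − E[S_θ]‖²), where S_θ(z) = ∇A(f_θ(z)) and expectations/variances are over z ∼ p(z), assuming (1/n)∑ᵢT(xᵢ) = E[S_{θ*}]. -/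
open MeasureTheory Real
open InnerProductSpace


-- strong convexity ⇒ second-order bound on fderiv of the gradient map
lemma aux_strong_mono {E : Type*} [NormedAddCommGroup E] [InnerProductSpace ℝ E]
    [CompleteSpace E] {L : ℝ} {F : E → ℝ} {f : E → E}
    (hFconv : ConvexOn ℝ Set.univ (fun z => F z - L / 2 * ‖z‖ ^ 2))
    (hf : ∀ z, HasGradientAt F (f z) z)
    (hfd : Differentiable ℝ f) (z u : E) :
    L * ‖u‖ ^ 2 ≤ (inner ℝ u (fderiv ℝ f z u) : ℝ) := by
  have hline : ∀ s : ℝ, HasDerivAt (fun t : ℝ => z + t • u) u s := fun s => by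
    simpa using ((hasDerivAt_id s).smul_const u).const_add z
  set ψ : ℝ → ℝ := fun t => F (z + t • u) - L / 2 * ‖z + t • u‖ ^ 2 with hψ
  have hψconv : ConvexOn ℝ Set.univ ψ := by
    have := hFconv.comp_affineMap (AffineMap.lineMap z (z + u) : ℝ →ᵃ[ℝ] E)
    have key : ψ = (fun z => F z - L / 2 * ‖z‖ ^ 2) ∘ ⇑(AffineMap.lineMap z (z + u) : ℝ →ᵃ[ℝ] E) := by
      funext t
      simp [ψ, Function.comp, AffineMap.lineMap_apply, add_comm]
    rw [key]; exact this.subset (Set.subset_univ _) convex_univ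
  have hnorm : ∀ t : ℝ, ‖z + t • u‖ ^ 2
      = ‖z‖ ^ 2 + 2 * ((inner ℝ z u : ℝ) * t) + ‖u‖ ^ 2 * t ^ 2 := by
    intro t
    rw [norm_add_sq_real, inner_smul_right, norm_smul]
    simp [mul_pow]
    ring
  have hψd : ∀ s : ℝ, HasDerivAt ψ
      ((inner ℝ (f (z + s • u)) u : ℝ) - (L * (inner ℝ z u : ℝ) + L * ‖u‖ ^ 2 * s)) s := by
    intro s
    have h1 : HasDerivAt (fun t : ℝ => F (z + t • u))
        ((inner ℝ (f (z + s • u)) u : ℝ)) s := by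
      have := ((hf (z + s • u)).hasFDerivAt).comp_hasDerivAt s (hline s)
      simpa [toDual_apply_apply, Function.comp_def] using this
    have h2 : HasDerivAt (fun t : ℝ => L / 2 * ‖z + t • u‖ ^ 2)
        (L * (inner ℝ z u : ℝ) + L * ‖u‖ ^ 2 * s) s := by
      have h3 : HasDerivAt (fun t : ℝ => ‖z‖ ^ 2 + 2 * ((inner ℝ z u : ℝ) * t) + ‖u‖ ^ 2 * t ^ 2)
          (2 * (inner ℝ z u : ℝ) + ‖u‖ ^ 2 * (2 * s)) s := by
        have ha := ((hasDerivAt_id s).const_mul (inner ℝ z u : ℝ)).const_mul (2 : ℝ)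
        have hb := (hasDerivAt_pow 2 s).const_mul (‖u‖ ^ 2)
        have := ((ha.const_add (‖z‖ ^ 2)).add hb)
        refine this.congr_deriv ?_
        ring
      have h4 := h3.const_mul (L / 2)
      have heq : (fun t : ℝ => L / 2 * (‖z‖ ^ 2 + 2 * ((inner ℝ z u : ℝ) * t) + ‖u‖ ^ 2 * t ^ 2))
          = fun t : ℝ => L / 2 * ‖z + t • u‖ ^ 2 := by
        funext t; rw [hnorm t]
      rw [heq] at h4
      refine h4.congr_deriv ?_
      ring
    simpa [hψ, Pi.sub_def] using h1.sub h2
  -- monotonicity of ψ' on positives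
  have hmono : ∀ t : ℝ, 0 < t →
      L * ‖u‖ ^ 2 * t ≤ (inner ℝ (f (z + t • u)) u : ℝ) - (inner ℝ (f z) u : ℝ) := by
    intro t ht
    have h1 := hψconv.le_slope_of_hasDerivAt (Set.mem_univ 0) (Set.mem_univ t) ht (by simpa using hψd 0)
    have h2 := hψconv.slope_le_of_hasDerivAt (Set.mem_univ 0) (Set.mem_univ t) ht (hψd t)
    have := h1.trans h2
    nlinarith [this]
  -- pass to the limit
  have hd : HasDerivAt (fun t : ℝ => f (z + t • u)) (fderiv ℝ f z u) 0 := by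
    have hd0 := (hfd (z + (0:ℝ) • u)).hasFDerivAt.comp_hasDerivAt 0 (hline 0)
    simpa [Function.comp_def] using hd0
  have hφ : HasDerivAt (fun t : ℝ => (inner ℝ u (f (z + t • u)) : ℝ))
      ((inner ℝ u (fderiv ℝ f z u) : ℝ)) 0 := by
    have := ((innerSL ℝ u).hasFDerivAt).comp_hasDerivAt 0 hd
    simpa [Function.comp_def] using this
  have htend := hasDerivAt_iff_tendsto_slope.mp hφ
  have htend' : Filter.Tendsto (slope (fun t : ℝ => (inner ℝ u (f (z + t • u)) : ℝ)) 0)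
      (nhdsWithin 0 (Set.Ioi 0)) (nhds ((inner ℝ u (fderiv ℝ f z u) : ℝ))) :=
    htend.mono_left (nhdsWithin_mono 0 (fun t ht => ne_of_gt ht))
  refine ge_of_tendsto htend' ?_
  filter_upwards [self_mem_nhdsWithin] with t ht
  have ht : (0:ℝ) < t := ht
  have := hmono t ht
  rw [slope_def_field]
  simp only [zero_smul, add_zero, sub_zero]
  rw [le_div_iff₀ ht]
  have e1 : (inner ℝ u (f (z + t • u)) : ℝ) = (inner ℝ (f (z + t • u)) u : ℝ) := real_inner_comm _ _
  have e2 : (inner ℝ u (f z) : ℝ) = (inner ℝ (f z) u : ℝ) := real_inner_comm _ _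
  nlinarith [this]


section Aux
variable {l : ℕ}
local notation "E" => EuclideanSpace ℝ (Fin l)

-- differentiability of the gradient map of a smooth function
lemma aux_grad_smooth {F : E → ℝ} {f : E → E}
    (hFs : ContDiff ℝ (⊤ : ℕ∞) F) (hf : ∀ z, HasGradientAt F (f z) z) :
    Differentiable ℝ f := by
  have hfeq : f = fun z => (toDual ℝ E).symm (fderiv ℝ F z) := by
    funext z
    rw [← (hf z).gradient]
    rfl
  have h1 : ContDiff ℝ (⊤ : ℕ∞) (fun z => fderiv ℝ F z) := hFs.fderiv_right (by simp)
  rw [hfeq]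
  exact ((toDual ℝ E).symm.toContinuousLinearEquiv : _ ≃L[ℝ] E).differentiable.comp
    (h1.differentiable (by simp))

end Aux


set_option maxHeartbeats 1000000 in
/-- Combining Theorem 2 and the bias–variance decomposition: with
`S_θ(z) = ∇A(f_θ(z))`, `S_{θ*}(z) = ∇A(f_{θ*}(z))` and assuming
`(1/n)∑ᵢ T(xᵢ) = E_{p(z)}[S_{θ*}]`, we have
`F̄_θ ≥ L² (Var[S_θ] + ‖E[S_{θ*}] - E[S_θ]‖²)`. -/
theorem fisher_lower_bound_bias_variance {l n : ℕ} (hn : 0 < n) {L : ℝ} (hL : 0 < L)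
    (p : EuclideanSpace ℝ (Fin l) → ℝ)
    (F : EuclideanSpace ℝ (Fin l) → ℝ)
    (f fstar : EuclideanSpace ℝ (Fin l) → EuclideanSpace ℝ (Fin l))
    (A : EuclideanSpace ℝ (Fin l) → ℝ)
    (gA : EuclideanSpace ℝ (Fin l) → EuclideanSpace ℝ (Fin l))
    (c : Fin n → EuclideanSpace ℝ (Fin l)) (h₀ : Fin n → ℝ) (Z : Fin n → ℝ)
    (hp : ∀ z, 0 < p z) (hps : ContDiff ℝ (⊤ : ℕ∞) p)
    (hpint : ∫ z, p z = 1)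
    (hFs : ContDiff ℝ (⊤ : ℕ∞) F)
    (hFconv : ConvexOn ℝ Set.univ (fun z => F z - L / 2 * ‖z‖ ^ 2))
    (hf : ∀ z, HasGradientAt F (f z) z)
    (hAs : ContDiff ℝ (⊤ : ℕ∞) A)
    (hgA : ∀ ξ, HasGradientAt A (gA ξ) ξ)
    (hh : ∀ i, 0 < h₀ i)
    (like : Fin n → EuclideanSpace ℝ (Fin l) → ℝ)
    (hlike : like = fun i z => h₀ i * Real.exp (inner ℝ (f z) (c i) - A (f z)))
    (hZ : ∀ i, Z i = ∫ z, p z * like i z) (hZpos : ∀ i, 0 < Z i)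
    (post : Fin n → EuclideanSpace ℝ (Fin l) → ℝ)
    (hpost : post = fun i z => p z * like i z / Z i)
    -- `S_θ` and its mean under the prior, and the mean of the true `S_{θ*}`
    (Sθ : EuclideanSpace ℝ (Fin l) → EuclideanSpace ℝ (Fin l))
    (hSθ : Sθ = fun z => gA (f z))
    (ESθ mstar : EuclideanSpace ℝ (Fin l))
    (hESθ : ESθ = ∫ z, p z • Sθ z)
    (hmstar : mstar = ∫ z, p z • gA (fstar z))
    -- the empirical mean of the sufficient statistics equals `E[S_{θ*}]`
    (hmatch : (1 / (n : ℝ)) • (∑ i, c i) = mstar)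
    (hint1 : Integrable (fun z =>
      ‖(1 / (n : ℝ)) • (∑ i, gradient (fun w => Real.log (post i w)) z)
        - gradient (fun w => Real.log (p w)) z‖ ^ 2 * p z))
    (hint2 : Integrable (fun z => ‖Sθ z - ESθ‖ ^ 2 * p z))
    (hint3 : Integrable (fun z => p z • Sθ z)) :
    L ^ 2 * ((∫ z, ‖Sθ z - ESθ‖ ^ 2 * p z) + ‖mstar - ESθ‖ ^ 2)
      ≤ ∫ z, ‖(1 / (n : ℝ)) • (∑ i, gradient (fun w => Real.log (post i w)) z)
              - gradient (fun w => Real.log (p w)) z‖ ^ 2 * p z := by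
  have hfd : Differentiable ℝ f := aux_grad_smooth hFs hf
  set T : EuclideanSpace ℝ (Fin l) → (EuclideanSpace ℝ (Fin l) →L[ℝ] EuclideanSpace ℝ (Fin l)) :=
    fun z => ContinuousLinearMap.adjoint (fderiv ℝ f z) with hT
  -- Step 1: the score of each posterior
  have hlogp : ∀ z, HasGradientAt (fun w => Real.log (p w))
      (gradient (fun w => Real.log (p w)) z) z := by
    intro z
    exact DifferentiableAt.hasGradientAt <|
      DifferentiableAt.log (hps.differentiable (by simp) z) (hp z).ne'
  have hgradpost : ∀ i z, gradient (fun w => Real.log (post i w)) z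
      = gradient (fun w => Real.log (p w)) z + T z (c i - gA (f z)) := by
    intro i z
    have hfun : (fun w => Real.log (post i w))
        = fun w => Real.log (p w) + ((inner ℝ (f w) (c i) : ℝ) - A (f w))
            + (Real.log (h₀ i) - Real.log (Z i)) := by
      funext w
      simp only [hpost, hlike]
      rw [Real.log_div (mul_ne_zero (hp w).ne'
            (mul_ne_zero (hh i).ne' (Real.exp_ne_zero _))) (hZpos i).ne',
        Real.log_mul (hp w).ne' (mul_ne_zero (hh i).ne' (Real.exp_ne_zero _)),
        Real.log_mul (hh i).ne' (Real.exp_ne_zero _), Real.log_exp]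
      ring
    have hJ : HasFDerivAt f (fderiv ℝ f z) z := (hfd z).hasFDerivAt
    have h1 : HasFDerivAt (fun w => Real.log (p w))
        (toDual ℝ _ (gradient (fun w => Real.log (p w)) z)) z := (hlogp z).hasFDerivAt
    have h2 : HasFDerivAt (fun w => (inner ℝ (f w) (c i) : ℝ))
        ((innerSL ℝ (c i)).comp (fderiv ℝ f z)) z := by
      have h2' := ((innerSL ℝ (c i)).hasFDerivAt (x := f z)).comp z hJ
      refine h2'.congr_of_eventuallyEq (Filter.Eventually.of_forall fun w => ?_)
      simp only [Function.comp_apply, innerSL_apply_apply]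
      exact real_inner_comm _ _
    have h3 : HasFDerivAt (fun w => A (f w))
        ((toDual ℝ _ (gA (f z))).comp (fderiv ℝ f z)) z :=
      ((hgA (f z)).hasFDerivAt).comp z hJ
    have total := (h1.add (h2.sub h3)).add_const (Real.log (h₀ i) - Real.log (Z i))
    have hdual : toDual ℝ _ (gradient (fun w => Real.log (p w)) z + T z (c i - gA (f z)))
        = toDual ℝ _ (gradient (fun w => Real.log (p w)) z)
          + ((innerSL ℝ (c i)).comp (fderiv ℝ f z)
              - (toDual ℝ _ (gA (f z))).comp (fderiv ℝ f z)) := by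
      apply ContinuousLinearMap.ext
      intro u
      simp only [ContinuousLinearMap.add_apply, ContinuousLinearMap.sub_apply,
        ContinuousLinearMap.comp_apply, toDual_apply_apply, innerSL_apply_apply, hT]
      rw [inner_add_left, ContinuousLinearMap.adjoint_inner_left, inner_sub_left]
    rw [hfun]
    refine HasGradientAt.gradient (hasGradientAt_iff_hasFDerivAt.mpr ?_)
    rw [hdual]
    exact total
  -- Step 2: the integrand simplifies
  have hcast : ((n : ℝ)) ≠ 0 := Nat.cast_ne_zero.mpr hn.ne'
  have hsmuln : ∀ v : EuclideanSpace ℝ (Fin l), (1 / (n : ℝ)) • (n • v) = v := by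
    intro v
    rw [← Nat.cast_smul_eq_nsmul ℝ n v, smul_smul, one_div, inv_mul_cancel₀ hcast, one_smul]
  have hintegrand : ∀ z, (1 / (n : ℝ)) • (∑ i, gradient (fun w => Real.log (post i w)) z)
      - gradient (fun w => Real.log (p w)) z = T z (mstar - Sθ z) := by
    intro z
    have hsum : (∑ i, gradient (fun w => Real.log (post i w)) z)
        = n • gradient (fun w => Real.log (p w)) z + T z (∑ i, c i - n • gA (f z)) := by
      simp only [hgradpost]
      rw [Finset.sum_add_distrib, Finset.sum_const, Finset.card_univ, Fintype.card_fin,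
        ← map_sum (T z), Finset.sum_sub_distrib, Finset.sum_const, Finset.card_univ,
        Fintype.card_fin]
    rw [hsum, smul_add, hsmuln, ← map_smul (T z), smul_sub, hsmuln, hmatch, hSθ]
    abel
  -- Step 3: pointwise lower bound from strong convexity
  have hpt : ∀ z, L ^ 2 * (‖Sθ z - mstar‖ ^ 2 * p z)
      ≤ ‖(1 / (n : ℝ)) • (∑ i, gradient (fun w => Real.log (post i w)) z)
          - gradient (fun w => Real.log (p w)) z‖ ^ 2 * p z := by
    intro z
    rw [hintegrand z]
    set v := mstar - Sθ z with hv
    have hsm := aux_strong_mono hFconv hf hfd z v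
    have h1 : (inner ℝ (T z v) v : ℝ) = (inner ℝ v (fderiv ℝ f z v) : ℝ) :=
      ContinuousLinearMap.adjoint_inner_left _ _ _
    have h2 : L * ‖v‖ ^ 2 ≤ ‖T z v‖ * ‖v‖ :=
      (hsm.trans_eq h1.symm).trans (real_inner_le_norm _ _)
    have h3 : L * ‖v‖ ≤ ‖T z v‖ := by
      rcases eq_or_ne v 0 with h | h
      · simp [h]
      · have hn0 : 0 < ‖v‖ := norm_pos_iff.mpr h
        nlinarith [h2, hn0]
    have h4 : L ^ 2 * ‖v‖ ^ 2 ≤ ‖T z v‖ ^ 2 := by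
      nlinarith [norm_nonneg (T z v), norm_nonneg v, hL.le]
    have h5 : ‖Sθ z - mstar‖ = ‖v‖ := norm_sub_rev _ _
    rw [h5]
    calc L ^ 2 * (‖v‖ ^ 2 * p z) = (L ^ 2 * ‖v‖ ^ 2) * p z := by ring
      _ ≤ ‖T z v‖ ^ 2 * p z := mul_le_mul_of_nonneg_right h4 (hp z).le
  -- Step 4: bias-variance decomposition
  have hpInt : Integrable p := by
    by_contra h
    rw [integral_undef h] at hpint
    norm_num at hpint
  set b : EuclideanSpace ℝ (Fin l) := ESθ - mstar with hb
  have hg : Integrable (fun z => p z • Sθ z - p z • ESθ) := hint3.sub (hpInt.smul_const ESθ)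
  have hinner : Integrable (fun z => (inner ℝ b (p z • Sθ z - p z • ESθ) : ℝ)) := by
    have := ContinuousLinearMap.integrable_comp (innerSL ℝ b) hg
    exact this
  have hpb : Integrable (fun z => ‖b‖ ^ 2 * p z) := hpInt.const_mul _
  have hinner2 : Integrable (fun z => 2 * (inner ℝ b (p z • Sθ z - p z • ESθ) : ℝ)) :=
    hinner.const_mul 2
  have hptws : ∀ z, ‖Sθ z - mstar‖ ^ 2 * p z
      = ‖Sθ z - ESθ‖ ^ 2 * p z
        + (2 * (inner ℝ b (p z • Sθ z - p z • ESθ) : ℝ) + ‖b‖ ^ 2 * p z) := by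
    intro z
    have hsplit : Sθ z - mstar = (Sθ z - ESθ) + b := by rw [hb]; abel
    have hib : (inner ℝ b (p z • Sθ z - p z • ESθ) : ℝ)
        = p z * (inner ℝ (Sθ z - ESθ) b : ℝ) := by
      rw [← smul_sub, real_inner_comm, real_inner_smul_left]
    rw [hsplit, norm_add_sq_real, hib]
    ring
  have hIsub : Integrable (fun z => L ^ 2 * (‖Sθ z - mstar‖ ^ 2 * p z)) := by
    refine Integrable.const_mul ?_ _
    refine (hint2.add (hinner2.add hpb)).congr ?_
    exact Filter.Eventually.of_forall fun z => (hptws z).symm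
  have hbv : ∫ z, ‖Sθ z - mstar‖ ^ 2 * p z
      = (∫ z, ‖Sθ z - ESθ‖ ^ 2 * p z) + ‖mstar - ESθ‖ ^ 2 := by
    have heq : ∫ z, ‖Sθ z - mstar‖ ^ 2 * p z
        = ∫ z, (‖Sθ z - ESθ‖ ^ 2 * p z
            + (2 * (inner ℝ b (p z • Sθ z - p z • ESθ) : ℝ) + ‖b‖ ^ 2 * p z)) := by
      congr 1
      funext z
      exact hptws z
    have hgint : (∫ z, (p z • Sθ z - p z • ESθ)) = 0 := by
      rw [integral_sub hint3 (hpInt.smul_const ESθ), integral_smul_const, hpint, hESθ,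
        one_smul, sub_self]
    have hinner0 : ∫ z, (inner ℝ b (p z • Sθ z - p z • ESθ) : ℝ) = 0 := by
      have h := (ContinuousLinearMap.integral_comp_comm (innerSL ℝ b) hg)
      rw [hgint, map_zero] at h
      have hfn : (fun z => (inner ℝ b (p z • Sθ z - p z • ESθ) : ℝ))
          = fun z => (innerSL ℝ b) (p z • Sθ z - p z • ESθ) := by
        funext z
        rw [innerSL_apply_apply]
      rw [hfn]
      exact h
    have hi23 : Integrable (fun z => 2 * (inner ℝ b (p z • Sθ z - p z • ESθ) : ℝ)
        + ‖b‖ ^ 2 * p z) := hinner2.add hpb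
    have e1 : ∫ z, (‖Sθ z - ESθ‖ ^ 2 * p z
        + (2 * (inner ℝ b (p z • Sθ z - p z • ESθ) : ℝ) + ‖b‖ ^ 2 * p z))
        = (∫ z, ‖Sθ z - ESθ‖ ^ 2 * p z)
          + ∫ z, (2 * (inner ℝ b (p z • Sθ z - p z • ESθ) : ℝ) + ‖b‖ ^ 2 * p z) :=
      integral_add hint2 hi23
    have e2 : ∫ z, (2 * (inner ℝ b (p z • Sθ z - p z • ESθ) : ℝ) + ‖b‖ ^ 2 * p z)
        = (∫ z, 2 * (inner ℝ b (p z • Sθ z - p z • ESθ) : ℝ)) + ∫ z, ‖b‖ ^ 2 * p z :=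
      integral_add hinner2 hpb
    rw [heq, e1, e2, integral_const_mul, hinner0, integral_const_mul, hpint]
    have : ‖mstar - ESθ‖ = ‖b‖ := by rw [hb, norm_sub_rev]
    rw [this]
    ring
  calc L ^ 2 * ((∫ z, ‖Sθ z - ESθ‖ ^ 2 * p z) + ‖mstar - ESθ‖ ^ 2)
      = ∫ z, L ^ 2 * (‖Sθ z - mstar‖ ^ 2 * p z) := by
        rw [← hbv, integral_const_mul]
    _ ≤ _ := integral_mono hIsub hint1 hpt
end
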